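/- For every n ≥ 1 and every unit vector ψ in the n-qubit space (ℂ²)^⊗n, the Groverian entanglement measure is bounded above by the fidelity-based coherence measure: E_g(ψ) ≤ C_f(ψ). Consequently (1 − C_f(ψ)²)/2 ≤ (1 − E_g(ψ)²)/2, i.e., the bound on the SKW-3 success probability never exceeds the bound on the SKW-2 success probability. -/

import Mathlib

open scoped BigOperators Kronecker ComplexOrder Matrix

namespace SKW

noncomputable section

/-- Bit strings of length `n`: vertices of the `n`-dimensional hypercube /
    computational basis labels of `n` qubits. -/
abbrev BV (n : ℕ) := Fin n → Bool

/-- Inner product `⟨v|w⟩`, conjugate-linear in the first argument. -/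
def ip {α : Type*} [Fintype α] (v w : α → ℂ) : ℂ :=
  ∑ i, (starRingEnd ℂ) (v i) * w i

/-- Squared `ℓ²`-norm of a vector of amplitudes. -/
def normSq {α : Type*} [Fintype α] (v : α → ℂ) : ℝ :=
  ∑ i, ‖v i‖ ^ 2

/-- Flip the `d`-th bit of `x` (i.e. `x ⊕ e_d`). -/
def flipBit {n : ℕ} (x : BV n) (d : Fin n) : BV n := Function.update x d (!x d)

/-- The shift operator `S = Σ_{d,x} |d, x ⊕ e_d⟩⟨d, x|` on `ℂ^n ⊗ ℂ^N`. -/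
def shift (n : ℕ) : Matrix (Fin n × BV n) (Fin n × BV n) ℂ :=
  Matrix.of fun p q => if p.1 = q.1 ∧ p.2 = flipBit q.2 q.1 then 1 else 0

/-- The coin-space equal superposition `|S^c⟩ = (1/√n) Σ_d |d⟩`. -/
def sc (n : ℕ) : Fin n → ℂ := fun _ => ((1 / Real.sqrt n : ℝ) : ℂ)

/-- The node-space equal superposition `|η⟩ = (1/√N) Σ_x |x⟩`, `N = 2^n`. -/
def eta (n : ℕ) : BV n → ℂ := fun _ => ((1 / Real.sqrt ((2 : ℝ) ^ n) : ℝ) : ℂ)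

/-- Grover coin `G = 2|S^c⟩⟨S^c| − I`. -/
def grover (n : ℕ) : Matrix (Fin n) (Fin n) ℂ :=
  (2 : ℂ) • Matrix.vecMulVec (sc n) (fun d => (starRingEnd ℂ) (sc n d)) - 1

/-- Rank-one projector `|a⟩⟨a|` onto a basis vector. -/
def projV {α : Type*} [Fintype α] [DecidableEq α] (a : α) : Matrix α α ℂ :=
  Matrix.of fun x y => if x = a ∧ y = a then 1 else 0

/-- Perturbed coin `C = G ⊗ I + (−I − G) ⊗ |x_tg⟩⟨x_tg|`. -/
def coin (n : ℕ) (t : BV n) : Matrix (Fin n × BV n) (Fin n × BV n) ℂ :=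
  grover n ⊗ₖ (1 : Matrix (BV n) (BV n) ℂ) +
    (-(1 : Matrix (Fin n) (Fin n) ℂ) - grover n) ⊗ₖ projV t

/-- Perturbed evolution operator `V = S·C`. -/
def walkOp (n : ℕ) (t : BV n) : Matrix (Fin n × BV n) (Fin n × BV n) ℂ :=
  shift n * coin n t

/-- Number of iterations `τ = ⌊(π/2)√(2^{n−1})⌋`. -/
def tau (n : ℕ) : ℕ := ⌊(Real.pi / 2) * Real.sqrt ((2 : ℝ) ^ (n - 1))⌋₊

/-- Tensor product of a coin vector with a node vector. -/
def tensorCN {n : ℕ} (c : Fin n → ℂ) (v : BV n → ℂ) : Fin n × BV n → ℂ :=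
  fun p => c p.1 * v p.2

/-- Computational basis vector `|a⟩`. -/
def basisVec {α : Type*} [DecidableEq α] (a : α) : α → ℂ :=
  fun x => if x = a then 1 else 0

/-- Target state `|Γ⟩ = |S^c⟩ ⊗ |x_tg⟩`. -/
def gammaSt (n : ℕ) (t : BV n) : Fin n × BV n → ℂ :=
  tensorCN (sc n) (basisVec t)

/-- Average success probability of the SKW-1 algorithm on initial node state `ψ`. -/
def P1 (n : ℕ) (ψ : BV n → ℂ) : ℝ :=
  (1 / (2 : ℝ) ^ n) * ∑ t : BV n,
    ‖ip (gammaSt n t) ((walkOp n t ^ tau n).mulVec (tensorCN (sc n) ψ))‖ ^ 2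

/-- Coherence fraction `f_c(ψ) = |⟨η|ψ⟩|²`. -/
def fc (n : ℕ) (ψ : BV n → ℂ) : ℝ := ‖ip (eta n) ψ‖ ^ 2

/-- Kronecker product of `n` single-qubit matrices, as a matrix on `(ℂ²)^⊗n`. -/
def kronN {n : ℕ} (U : Fin n → Matrix Bool Bool ℂ) : Matrix (BV n) (BV n) ℂ :=
  Matrix.of fun x y => ∏ j, U j (x j) (y j)

/-- Tensor product of `n` single-qubit vectors. -/
def tensorVec {n : ℕ} (u : Fin n → Bool → ℂ) : BV n → ℂ :=
  fun x => ∏ j, u j (x j)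

/-- Density matrix: positive semidefinite with trace one. -/
def IsDensity {α : Type*} [Fintype α] [DecidableEq α] (ρ : Matrix α α ℂ) : Prop :=
  ρ.PosSemidef ∧ ρ.trace = 1

/-- Separable state: finite convex combination of tensor products of
single-qubit density matrices. -/
def IsSep {n : ℕ} (σ : Matrix (BV n) (BV n) ℂ) : Prop :=
  ∃ (m : ℕ) (p : Fin m → ℝ) (ρ : Fin m → Fin n → Matrix Bool Bool ℂ),
    (∀ i, 0 ≤ p i) ∧ ∑ i, p i = 1 ∧ (∀ i j, IsDensity (ρ i j)) ∧
      σ = ∑ i, (p i : ℂ) • kronN (ρ i)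

/-- Fidelity `⟨ψ|ρ|ψ⟩` between a pure state and a density matrix. -/
def fid {α : Type*} [Fintype α] (ψ : α → ℂ) (ρ : Matrix α α ℂ) : ℝ :=
  (ip ψ (ρ.mulVec ψ)).re

/-- Groverian entanglement measure `E_g(ψ) = min_{σ separable} √(1 − ⟨ψ|σ|ψ⟩)`. -/
def Eg {n : ℕ} (ψ : BV n → ℂ) : ℝ :=
  sInf {r : ℝ | ∃ σ, IsSep σ ∧ r = Real.sqrt (1 - fid ψ σ)}

/-- Incoherent state: density matrix diagonal in the computational basis. -/
def IsIncoherent {α : Type*} [Fintype α] [DecidableEq α] (δ : Matrix α α ℂ) : Prop :=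
  IsDensity δ ∧ ∀ x y, x ≠ y → δ x y = 0

/-- Fidelity-based coherence measure `C_f(ψ) = min_{δ incoherent} √(1 − ⟨ψ|δ|ψ⟩)`. -/
def Cf {α : Type*} [Fintype α] [DecidableEq α] (ψ : α → ℂ) : ℝ :=
  sInf {r : ℝ | ∃ δ, IsIncoherent δ ∧ r = Real.sqrt (1 - fid ψ δ)}

/-- Pauli X. -/
def PX : Matrix Bool Bool ℂ := Matrix.of fun a b => if a = b then 0 else 1

/-- Pauli Y. -/
def PY : Matrix Bool Bool ℂ :=
  Matrix.of fun a b => if a = b then 0 else if a then Complex.I else -Complex.I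

/-- Pauli Z. -/
def PZ : Matrix Bool Bool ℂ :=
  Matrix.of fun a b => if a = b then (if a then -1 else 1) else 0

/-- The 2×2 Hadamard matrix. -/
def Had : Matrix Bool Bool ℂ :=
  Matrix.of fun a b => ((1 / Real.sqrt 2 : ℝ) : ℂ) * (if a && b then -1 else 1)

/-- `H^{⊗n}`. -/
def HadN (n : ℕ) : Matrix (BV n) (BV n) ℂ := kronN fun _ => Had

/-- Membership in `{X, Y, Z}`. -/
def IsPauliXYZ (V : Matrix Bool Bool ℂ) : Prop := V = PX ∨ V = PY ∨ V = PZ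

/-- Maximal average success probability of SKW-2: optimize over a layer of
single-qubit unitaries applied to the node register. -/
def P2 (n : ℕ) (ψ : BV n → ℂ) : ℝ :=
  sSup {r : ℝ | ∃ U : Fin n → Matrix Bool Bool ℂ,
    (∀ j, U j ∈ Matrix.unitaryGroup Bool ℂ) ∧ r = P1 n ((kronN U).mulVec ψ)}

/-- Maximal average success probability of SKW-3: a layer of Pauli gates from
`{X,Y,Z}` followed by `H^{⊗n}`. -/
def P3 (n : ℕ) (ψ : BV n → ℂ) : ℝ :=
  sSup {r : ℝ | ∃ V : Fin n → Matrix Bool Bool ℂ,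
    (∀ j, IsPauliXYZ (V j)) ∧ r = P1 n ((HadN n * kronN V).mulVec ψ)}

/-- Even Hamming-weight predicate. -/
def evenPar {m : ℕ} (x : BV m) : Prop :=
  Even (Finset.univ.filter (fun j => x j = true)).card

instance {m : ℕ} (x : BV m) : Decidable (evenPar x) := by
  unfold evenPar; infer_instance

/-- Equal superposition over even-parity vertices. -/
def etaE (m : ℕ) : BV m → ℂ :=
  fun x => if evenPar x then ((1 / Real.sqrt ((2 : ℝ) ^ m / 2) : ℝ) : ℂ) else 0

/-- Projection onto even-parity vertices. -/
def projE {m : ℕ} (ψ : BV m → ℂ) : BV m → ℂ :=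
  fun x => if evenPar x then ψ x else 0

/-- Optimized perturbed evolution `V_opt = S(G ⊗ I)S·C`. -/
def walkOptOp (m : ℕ) (t : BV m) : Matrix (Fin m × BV m) (Fin m × BV m) ℂ :=
  shift m * (grover m ⊗ₖ (1 : Matrix (BV m) (BV m) ℂ)) * shift m * coin m t

/-- `τ_opt = ⌊(π/(2√2))√N⌋`. -/
def tauOpt (m : ℕ) : ℕ :=
  ⌊(Real.pi / (2 * Real.sqrt 2)) * Real.sqrt ((2 : ℝ) ^ m)⌋₊

/-- Average success probability of the optimized OSKW-1 algorithm. -/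
def P1opt (m : ℕ) (ψ : BV m → ℂ) : ℝ :=
  (1 / ((2 : ℝ) ^ m / 2)) * ∑ t ∈ Finset.univ.filter (fun t : BV m => evenPar t),
    ‖ip (gammaSt m t)
      ((walkOptOp m t ^ tauOpt m).mulVec (tensorCN (sc m) (projE ψ)))‖ ^ 2

/-- Coherence fraction with respect to the even-parity equal superposition. -/
def fcE (m : ℕ) (ψ : BV m → ℂ) : ℝ := ‖ip (etaE m) ψ‖ ^ 2

/-- Parity bit of a bit string. -/
def parityBit {n : ℕ} (x : BV n) : Bool :=
  Nat.bodd (Finset.univ.filter (fun j => x j = true)).card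

/-- Embed an `n`-qubit node state into the even-parity subspace of the
`(n+1)`-dimensional hypercube by appending a parity bit. -/
def embedEven {n : ℕ} (ψ : BV n → ℂ) : BV (n + 1) → ℂ :=
  fun x =>
    if x (Fin.last n) = parityBit (fun j : Fin n => x j.castSucc)
    then ψ (fun j : Fin n => x j.castSucc) else 0

/-- Maximal average success probability of OSKW-2. -/
def P2opt (n : ℕ) (ψ : BV n → ℂ) : ℝ :=
  sSup {r : ℝ | ∃ U : Fin n → Matrix Bool Bool ℂ,
    (∀ j, U j ∈ Matrix.unitaryGroup Bool ℂ) ∧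
      r = P1opt (n + 1) (embedEven ((kronN U).mulVec ψ))}

/-- Maximal average success probability of OSKW-3. -/
def P3opt (n : ℕ) (ψ : BV n → ℂ) : ℝ :=
  sSup {r : ℝ | ∃ V : Fin n → Matrix Bool Bool ℂ,
    (∀ j, IsPauliXYZ (V j)) ∧
      r = P1opt (n + 1) (embedEven ((HadN n * kronN V).mulVec ψ))}

/-- Input density matrix `ρ_in = |S^c⟩⟨S^c| ⊗ ρ`. -/
def rhoIn (n : ℕ) (ρ : Matrix (BV n) (BV n) ℂ) :
    Matrix (Fin n × BV n) (Fin n × BV n) ℂ :=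
  Matrix.vecMulVec (sc n) (fun d => (starRingEnd ℂ) (sc n d)) ⊗ₖ ρ

/-- Average success probability of SKW-1 with a mixed initial node state. -/
def P1mix (n : ℕ) (ρ : Matrix (BV n) (BV n) ℂ) : ℝ :=
  (1 / (2 : ℝ) ^ n) * ∑ t : BV n,
    ((walkOp n t ^ tau n * rhoIn n ρ * (walkOp n t ^ tau n).conjTranspose *
      Matrix.vecMulVec (gammaSt n t) (fun p => (starRingEnd ℂ) (gammaSt n t p))).trace).re

/-- Coherence fraction `f_c(ρ) = ⟨η|ρ|η⟩` of a mixed state. -/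
def fcMix (n : ℕ) (ρ : Matrix (BV n) (BV n) ℂ) : ℝ := fid (eta n) ρ

/-- The all-zeros basis state `|0ⁿ⟩`. -/
def zeroVec (n : ℕ) : BV n → ℂ := basisVec (fun _ => false)

/-- The single-qubit state `|+⟩`. -/
def plusVec : Bool → ℂ := fun _ => ((1 / Real.sqrt 2 : ℝ) : ℂ)

/-- Product (unentangled) pure state. -/
def IsProductVec {n : ℕ} (ψ : BV n → ℂ) : Prop :=
  ∃ u : Fin n → Bool → ℂ, (∀ j, normSq (u j) = 1) ∧ ψ = tensorVec u

/-! An incoherent state is a convex mixture of computational basis states `|x⟩⟨x|`, each of which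
is a product of single-qubit states; so every incoherent state is separable, and the infimum
defining `E_g` runs over a larger set than the one defining `C_f`. -/

lemma projV_eq_diagonal {α : Type*} [Fintype α] [DecidableEq α] (a : α) :
    projV a = Matrix.diagonal (Pi.single a 1) := by
  ext x y
  simp only [projV, Matrix.of_apply, Matrix.diagonal_apply, Pi.single_apply]
  split_ifs <;> grind

lemma isIncoherent_projV {α : Type*} [Fintype α] [DecidableEq α] (a : α) :
    IsIncoherent (projV a) := by
  refine ⟨⟨?_, ?_⟩, fun x y hxy => ?_⟩
  · rw [projV_eq_diagonal]
    exact Matrix.PosSemidef.diagonal (Pi.single_nonneg.mpr zero_le_one)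
  · simp [projV_eq_diagonal]
  · simp [projV_eq_diagonal, hxy]

lemma kronN_projV {n : ℕ} (b : BV n) : kronN (fun j => projV (b j)) = projV b := by
  ext x y
  simp only [kronN, projV, Matrix.of_apply, Finset.prod_ite_zero, Finset.prod_const_one,
    funext_iff, Finset.mem_univ, true_implies, forall_and]

lemma isSep_sum {n : ℕ} {ι : Type*} [Fintype ι] (p : ι → ℝ) (ρ : ι → Fin n → Matrix Bool Bool ℂ)
    (hp : ∀ i, 0 ≤ p i) (hp1 : ∑ i, p i = 1) (hρ : ∀ i j, IsDensity (ρ i j)) :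
    IsSep (∑ i, (p i : ℂ) • kronN (ρ i)) := by
  let e := (Fintype.equivFin ι).symm
  refine ⟨Fintype.card ι, p ∘ e, ρ ∘ e, fun i => hp _, ?_, fun i => hρ _, ?_⟩
  · rwa [Fintype.sum_equiv e (p ∘ e) p fun _ => rfl]
  · exact (Fintype.sum_equiv e _ _ fun _ => rfl).symm

/-- The diagonal of a density matrix is real and nonnegative, so it gives convex weights. -/
lemma IsIncoherent.eq_sum_projV {α : Type*} [Fintype α] [DecidableEq α]
    {δ : Matrix α α ℂ} (h : IsIncoherent δ) : δ = ∑ x, ((δ x x).re : ℂ) • projV x := by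
  have hreal : ∀ x, ((δ x x).re : ℂ) = δ x x := fun x =>
    Complex.ext rfl ((Complex.ofReal_im _).trans (Complex.nonneg_iff.mp h.1.1.diag_nonneg).2)
  ext x y
  simp only [projV_eq_diagonal, Matrix.sum_apply, Matrix.smul_apply, Matrix.diagonal_apply,
    hreal, smul_eq_mul]
  by_cases hxy : x = y
  · subst hxy
    simp [Pi.single_apply]
  · simp [hxy, h.2 x y hxy]

lemma IsIncoherent.isSep {n : ℕ} {δ : Matrix (BV n) (BV n) ℂ} (h : IsIncoherent δ) :
    IsSep δ := by
  have hdiag : ∀ x, 0 ≤ (δ x x).re := fun x => (Complex.nonneg_iff.mp h.1.1.diag_nonneg).1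
  rw [h.eq_sum_projV]
  simp_rw [← kronN_projV]
  refine isSep_sum _ _ hdiag ?_ fun x j => (isIncoherent_projV (x j)).1
  rw [← Complex.re_sum]
  exact (congrArg Complex.re h.1.2).trans Complex.one_re

lemma Eg_nonneg {n : ℕ} (ψ : BV n → ℂ) : 0 ≤ Eg ψ :=
  Real.sInf_nonneg <| by rintro r ⟨σ, -, rfl⟩; exact Real.sqrt_nonneg _

lemma Eg_le_Cf {n : ℕ} (ψ : BV n → ℂ) : Eg ψ ≤ Cf ψ := by
  refine csInf_le_csInf ⟨0, ?_⟩ ⟨_, projV 0, isIncoherent_projV 0, rfl⟩ ?_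
  · rintro r ⟨σ, -, rfl⟩
    exact Real.sqrt_nonneg _
  · rintro r ⟨δ, hδ, rfl⟩
    exact ⟨δ, hδ.isSep, rfl⟩

/-- The Groverian entanglement is bounded above by the fidelity-based
coherence, hence the SKW-3 success bound never exceeds the SKW-2 bound. -/
theorem groverian_le_coherence :
    ∀ n : ℕ, 1 ≤ n → ∀ ψ : BV n → ℂ, normSq ψ = 1 →
      Eg ψ ≤ Cf ψ ∧ (1 - Cf ψ ^ 2) / 2 ≤ (1 - Eg ψ ^ 2) / 2 := by
  intro n _ ψ _
  have hsq := pow_le_pow_left₀ (Eg_nonneg ψ) (Eg_le_Cf ψ) 2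
  exact ⟨Eg_le_Cf ψ, by linarith⟩

end

end SKW
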